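/- arXiv:2311.00222 — 3 statements merged into one kernel-verified Lean document; each statement's English description precedes it below -/
import Mathlib

section
/- A strategy profile V̂ : Fin n → Finset (Fin m) is a Nash equilibrium of the partition game if and only if both of the following hold: (1) for every task q there exists an agent i that is dominating for q with q ∈ V̂ i; and (2) for every task q and every agent j that is not dominating for q, q ∉ V̂ j. -/
open Finset Filter

noncomputable def fsMax (s : Finset ℝ) : ℝ := WithBot.unbotD 0 s.max

noncomputable def fsMin (s : Finset ℝ) : ℝ := WithTop.untopD 0 s.min

noncomputable def fsSubmax (s : Finset ℝ) : ℝ := fsMax (s.filter (fun x => x < fsMax s))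

/-- Agent `i` is dominating for task `q`. -/
def Dominating {n m : ℕ} (f : Fin n → Fin m → ℝ) (i : Fin n) (q : Fin m) : Prop :=
  ∀ j, f j q ≤ f i q

/-- Maximum of `f j q` over agents `j ≠ i` with `q ∈ V j` (0 if that set is empty). -/
noncomputable def othersMax {n m : ℕ} (f : Fin n → Fin m → ℝ)
    (V : Fin n → Finset (Fin m)) (i : Fin n) (q : Fin m) : ℝ :=
  fsMax ((Finset.univ.filter (fun j => j ≠ i ∧ q ∈ V j)).image (fun j => f j q))

/-- Utility of agent `i` in the partition game. -/
noncomputable def Hutil {n m : ℕ} (f : Fin n → Fin m → ℝ)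
    (V : Fin n → Finset (Fin m)) (i : Fin n) : ℝ :=
  ∑ q ∈ V i, (f i q - othersMax f V i q)

/-- Nash equilibrium of the partition game. -/
def IsNashP {n m : ℕ} (f : Fin n → Fin m → ℝ) (V : Fin n → Finset (Fin m)) : Prop :=
  ∀ i, ∀ V' : Finset (Fin m), Hutil f (Function.update V i V') i ≤ Hutil f V i

/-!
Agent `i`'s utility after switching to `V'` is `∑ q ∈ V', (f i q - othersMax f V i q)`, because the
opponents' bids do not depend on `V'`. A set maximizes such a sum exactly when it contains every task
with positive summand and no task with negative summand, so `V` is an equilibrium iff every agent bids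
on the tasks where it matches the best opposing bid, and on no task where it is beaten. Since some agent
is not dominating for `q`, the top value `f i q` is positive and thus beats the empty bid `0`; hence a
dominating agent must bid on `q`, and then every non-dominating agent is strictly beaten.
-/

theorem Finset.forall_sum_le_sum_iff {α M : Type*} [DecidableEq α] [AddCommMonoid M] [PartialOrder M]
    [IsOrderedCancelAddMonoid M] {g : α → M} {s : Finset α} :
    (∀ t : Finset α, ∑ x ∈ t, g x ≤ ∑ x ∈ s, g x) ↔ (∀ x ∈ s, 0 ≤ g x) ∧ (∀ x ∉ s, g x ≤ 0) := by
  refine ⟨fun h => ⟨fun x hx => ?_, fun x hx => ?_⟩, fun ⟨hs, hsc⟩ t => ?_⟩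
  · have h_erase := h (s.erase x)
    rwa [← add_sum_erase s g hx, le_add_iff_nonneg_left] at h_erase
  · have h_insert := h (insert x s)
    rwa [sum_insert hx, add_le_iff_nonpos_left] at h_insert
  · calc ∑ x ∈ t, g x = ∑ x ∈ t ∩ s, g x + ∑ x ∈ t \ s, g x := (sum_inter_add_sum_sdiff t s g).symm
      _ ≤ ∑ x ∈ t ∩ s, g x + 0 :=
        add_le_add_right (sum_nonpos fun x hx => hsc x (mem_sdiff.1 hx).2) _
      _ ≤ ∑ x ∈ s, g x := by
        rw [add_zero]
        exact sum_le_sum_of_subset_of_nonneg inter_subset_right fun x hx _ => hs x hx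

section FsMax

variable {s : Finset ℝ} {c : ℝ}

theorem fsMax_eq_max' (hs : s.Nonempty) : fsMax s = s.max' hs := by
  rw [fsMax, ← coe_max' hs, WithBot.unbotD_coe]

theorem le_fsMax {x : ℝ} (hx : x ∈ s) : x ≤ fsMax s := by
  rw [fsMax_eq_max' ⟨x, hx⟩]
  exact le_max' s x hx

theorem fsMax_le (hc : 0 ≤ c) (h : ∀ x ∈ s, x ≤ c) : fsMax s ≤ c := by
  rcases s.eq_empty_or_nonempty with rfl | hs
  · simpa [fsMax] using hc
  · rw [fsMax_eq_max' hs]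
    exact (max'_le_iff s hs).2 h

theorem fsMax_lt (hc : 0 < c) (h : ∀ x ∈ s, x < c) : fsMax s < c := by
  rcases s.eq_empty_or_nonempty with rfl | hs
  · simpa [fsMax] using hc
  · rw [fsMax_eq_max' hs]
    exact (max'_lt_iff s hs).2 h

end FsMax

section PartitionGame

variable {n m : ℕ} {f : Fin n → Fin m → ℝ} {V : Fin n → Finset (Fin m)} {i j : Fin n} {q : Fin m}

theorem le_othersMax (hj : j ≠ i) (hq : q ∈ V j) : f j q ≤ othersMax f V i q :=
  le_fsMax (mem_image_of_mem _ (by simp [hj, hq]))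

theorem othersMax_le {c : ℝ} (hc : 0 ≤ c) (h : ∀ j ≠ i, q ∈ V j → f j q ≤ c) :
    othersMax f V i q ≤ c :=
  fsMax_le hc <| forall_mem_image.2 fun j hj =>
    h j (mem_filter.1 hj).2.1 (mem_filter.1 hj).2.2

theorem othersMax_lt {c : ℝ} (hc : 0 < c) (h : ∀ j ≠ i, q ∈ V j → f j q < c) :
    othersMax f V i q < c :=
  fsMax_lt hc <| forall_mem_image.2 fun j hj =>
    h j (mem_filter.1 hj).2.1 (mem_filter.1 hj).2.2

theorem othersMax_update_self (V' : Finset (Fin m)) :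
    othersMax f (Function.update V i V') i q = othersMax f V i q := by
  unfold othersMax
  congr 2
  refine filter_congr fun j _ => and_congr_right fun hj => ?_
  rw [Function.update_of_ne hj]

theorem hutil_update_self (V' : Finset (Fin m)) :
    Hutil f (Function.update V i V') i = ∑ q ∈ V', (f i q - othersMax f V i q) := by
  simp only [Hutil, Function.update_self, othersMax_update_self]

theorem isNashP_iff :
    IsNashP f V ↔ ∀ i, (∀ q ∈ V i, othersMax f V i q ≤ f i q) ∧
      (∀ q ∉ V i, f i q ≤ othersMax f V i q) := by
  refine forall_congr' fun i => ?_
  simp only [hutil_update_self]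
  rw [Hutil, forall_sum_le_sum_iff]
  simp only [sub_nonneg, sub_nonpos]

theorem exists_dominating [Nonempty (Fin n)] (f : Fin n → Fin m → ℝ) (q : Fin m) :
    ∃ i, Dominating f i q :=
  Finite.exists_max (f · q)

theorem Dominating.lt_of_not_dominating (hi : Dominating f i q) (hj : ¬ Dominating f j q) :
    f j q < f i q := by
  obtain ⟨k, hk⟩ := not_forall.1 hj
  exact (not_le.1 hk).trans_le (hi k)

theorem Dominating.pos (hf : ∀ i q, 0 ≤ f i q) (hnt : ∃ j, ¬ Dominating f j q)
    (hi : Dominating f i q) : 0 < f i q :=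
  let ⟨j, hj⟩ := hnt
  (hf j q).trans_lt (hi.lt_of_not_dominating hj)

theorem IsNashP.exists_dominating_mem (hV : IsNashP f V) (hf : ∀ i q, 0 ≤ f i q)
    (hnt : ∃ j, ¬ Dominating f j q) : ∃ i, Dominating f i q ∧ q ∈ V i := by
  have : Nonempty (Fin n) := hnt.elim fun j _ => ⟨j⟩
  obtain ⟨i, hi⟩ := exists_dominating f q
  by_contra! h_none
  have h_beaten : othersMax f V i q < f i q :=
    othersMax_lt (hi.pos hf hnt) fun j _ hqj => hi.lt_of_not_dominating fun hj => h_none j hj hqj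
  exact h_beaten.not_ge ((isNashP_iff.1 hV i).2 q (h_none i hi))

theorem IsNashP.notMem_of_not_dominating (hV : IsNashP f V) (hf : ∀ i q, 0 ≤ f i q)
    (hnt : ∃ j, ¬ Dominating f j q) (hj : ¬ Dominating f j q) : q ∉ V j := by
  intro hqj
  obtain ⟨i, hi, hqi⟩ := hV.exists_dominating_mem hf hnt
  have hij : i ≠ j := by rintro rfl; exact hj hi
  have h_keeps : othersMax f V j q ≤ f j q := (isNashP_iff.1 hV j).1 q hqj
  exact (hi.lt_of_not_dominating hj).not_ge ((le_othersMax hij hqi).trans h_keeps)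

theorem isNashP_of_dominating (hf : ∀ i q, 0 ≤ f i q)
    (h_covered : ∀ q, ∃ i, Dominating f i q ∧ q ∈ V i)
    (h_only : ∀ q j, ¬ Dominating f j q → q ∉ V j) : IsNashP f V := by
  refine isNashP_iff.2 fun i => ⟨fun q hq => ?_, fun q hq => ?_⟩
  · have hi : Dominating f i q := by_contra fun hi => h_only q i hi hq
    exact othersMax_le (hf i q) fun j _ _ => hi j
  · obtain ⟨i', hi', hqi'⟩ := h_covered q
    have hi'i : i' ≠ i := by rintro rfl; exact hq hqi'
    exact (hi' i).trans (le_othersMax hi'i hqi')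

end PartitionGame

theorem nash_partition_game_characterization {n m : ℕ} (f : Fin n → Fin m → ℝ)
    (hf : ∀ i q, 0 ≤ f i q)
    (hnt : ∀ q : Fin m, ∃ j : Fin n, ¬ Dominating f j q)
    (Vhat : Fin n → Finset (Fin m)) :
    IsNashP f Vhat ↔
      ((∀ q, ∃ i, Dominating f i q ∧ q ∈ Vhat i) ∧
        (∀ q, ∀ j, ¬ Dominating f j q → q ∉ Vhat j)) :=
  ⟨fun hV => ⟨fun q => hV.exists_dominating_mem hf (hnt q),
      fun q _ hj => hV.notMem_of_not_dominating hf (hnt q) hj⟩,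
    fun ⟨h_covered, h_only⟩ => isNashP_of_dominating hf h_covered h_only⟩
end

section
/- If P* is an optimal partition, then every task is assigned only to a dominating agent: for every agent i and every task q, if q ∈ P* i then i is dominating for q. -/
open Finset Filter

/-- `P` is a partition of the task set: pairwise disjoint with union everything. -/
def IsPartitionP {n m : ℕ} (P : Fin n → Finset (Fin m)) : Prop :=
  (∀ i j, i ≠ j → Disjoint (P i) (P j)) ∧ (∀ q, ∃ i, q ∈ P i)

/-- Value of a partition. -/
noncomputable def Jval {n m : ℕ} (f : Fin n → Fin m → ℝ) (P : Fin n → Finset (Fin m)) : ℝ :=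
  ∑ i, ∑ q ∈ P i, f i q

/-- Optimal partition. -/
def IsOptimalPartition {n m : ℕ} (f : Fin n → Fin m → ℝ) (P : Fin n → Finset (Fin m)) : Prop :=
  IsPartitionP P ∧ ∀ P', IsPartitionP P' → Jval f P' ≤ Jval f P

section Reassign

open Function

variable {n m : ℕ} (P : Fin n → Finset (Fin m)) (q : Fin m) (j : Fin n)

def reassign : Fin n → Finset (Fin m) :=
  fun k => if k = j then insert q (P k) else (P k).erase q

variable {P q j}

theorem mem_reassign {k : Fin n} {x : Fin m} :
    x ∈ reassign P q j k ↔ if x = q then k = j else x ∈ P k := by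
  unfold reassign
  by_cases hk : k = j <;> by_cases hx : x = q <;> simp [hk, hx]

theorem IsPartitionP.reassign (hP : IsPartitionP P) : IsPartitionP (reassign P q j) := by
  refine ⟨fun a b hab => disjoint_left.mpr fun x hxa hxb => ?_, fun x => ?_⟩
  · rw [mem_reassign] at hxa hxb
    split_ifs at hxa hxb
    · exact hab (hxa.trans hxb.symm)
    · exact disjoint_left.mp (hP.1 a b hab) hxa hxb
  · by_cases hx : x = q
    · exact ⟨j, mem_reassign.mpr (if_pos hx ▸ rfl)⟩
    · obtain ⟨k, hk⟩ := hP.2 x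
      exact ⟨k, mem_reassign.mpr (by rwa [if_neg hx])⟩

theorem sum_reassign_add (f : Fin n → Fin m → ℝ) (hP : Pairwise (Disjoint on P)) {i : Fin n}
    (hq : q ∈ P i) (k : Fin n) :
    ∑ x ∈ reassign P q j k, f k x + (if k = i then f k q else 0)
      = ∑ x ∈ P k, f k x + (if k = j then f k q else 0) := by
  have hqk : q ∈ P k ↔ k = i := ⟨fun hk => by_contra fun hki =>
    disjoint_left.mp (hP hki) hk hq, fun hki => hki ▸ hq⟩
  unfold reassign
  by_cases hkj : k = j <;> by_cases hki : k = i
  · rw [if_pos hkj, if_pos hkj, if_pos hki, insert_eq_of_mem (hqk.mpr hki)]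
  · rw [if_pos hkj, if_pos hkj, if_neg hki, sum_insert (mt hqk.mp hki), add_zero,
      add_comm]
  · rw [if_neg hkj, if_neg hkj, if_pos hki, sum_erase_add _ _ (hqk.mpr hki), add_zero]
  · rw [if_neg hkj, if_neg hkj, if_neg hki, erase_eq_of_notMem (mt hqk.mp hki)]

theorem Jval_reassign (f : Fin n → Fin m → ℝ) (hP : Pairwise (Disjoint on P)) {i : Fin n}
    (hq : q ∈ P i) : Jval f (reassign P q j) = Jval f P - f i q + f j q := by
  have h := sum_congr rfl fun k (_ : k ∈ univ) => sum_reassign_add (j := j) f hP hq k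
  simp only [sum_add_distrib, sum_ite_eq', mem_univ, if_true] at h
  unfold Jval
  linarith

end Reassign

theorem optimal_partition_assigns_dominating_general {n m : ℕ} (f : Fin n → Fin m → ℝ)
    (Pstar : Fin n → Finset (Fin m)) (hopt : IsOptimalPartition f Pstar) :
    ∀ i q, q ∈ Pstar i → Dominating f i q := by
  intro i q hq j
  have h := hopt.2 _ (hopt.1.reassign (q := q) (j := j))
  rw [Jval_reassign f hopt.1.1 hq] at h
  linarith

theorem optimal_partition_assigns_dominating {n m : ℕ} (f : Fin n → Fin m → ℝ)
    (hf : ∀ i q, 0 ≤ f i q)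
    (Pstar : Fin n → Finset (Fin m)) (hopt : IsOptimalPartition f Pstar) :
    ∀ i q, q ∈ Pstar i → Dominating f i q :=
  optimal_partition_assigns_dominating_general f Pstar hopt
end

section
/- A matrix W̄ : Fin n → Fin m → ℝ with all entries in [0,1] is a fixed point of the PBRAG map if and only if W̄ is a Nash equilibrium of the weight game. -/
/- The utility of agent `i` is linear in its own row `w i`, with coefficient
`f i q - maxErase i (fun j => f j q * w j q)` on task `q`, since the competing bid excludes `i`.
Maximising a linear function over the box `[0,1]^m` decouples into one-dimensional problems, each
solved by `1` or `0` according to the sign of its coefficient (either value when it vanishes).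
A projected gradient step with positive step size leaves `w i q` fixed under exactly the same
sign conditions, so fixed points and Nash equilibria coincide. -/

open Finset Filter

/-- Maximum of `g j` over all `j ≠ i` (0 if that set is empty). -/
noncomputable def maxErase {n : ℕ} (i : Fin n) (g : Fin n → ℝ) : ℝ :=
  fsMax ((Finset.univ.erase i).image g)

/-- Utility of agent `i` in the weight game. -/
noncomputable def Uutil {n m : ℕ} (f : Fin n → Fin m → ℝ) (w : Fin n → Fin m → ℝ)
    (i : Fin n) : ℝ :=
  ∑ q, (f i q * w i q - maxErase i (fun j => f j q * w j q) * w i q)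

/-- All entries of the matrix lie in `[0,1]`. -/
def InUnit {n m : ℕ} (w : Fin n → Fin m → ℝ) : Prop :=
  ∀ i q, w i q ∈ Set.Icc (0 : ℝ) 1

/-- Nash equilibrium of the weight game. -/
def IsNashW {n m : ℕ} (f : Fin n → Fin m → ℝ) (w : Fin n → Fin m → ℝ) : Prop :=
  ∀ i, ∀ w' : Fin m → ℝ, (∀ q, w' q ∈ Set.Icc (0 : ℝ) 1) →
    Uutil f (Function.update w i w') i ≤ Uutil f w i

noncomputable def clamp (x : ℝ) : ℝ := max 0 (min x 1)

/-- One step of the projected best-response ascending gradient dynamics. -/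
noncomputable def pbrag {n m : ℕ} (f γ : Fin n → Fin m → ℝ)
    (w : Fin n → Fin m → ℝ) : Fin n → Fin m → ℝ :=
  fun i q => clamp (w i q + γ i q * (f i q - maxErase i (fun j => f j q * w j q)))

lemma maxErase_congr {n : ℕ} {i : Fin n} {g g' : Fin n → ℝ} (h : ∀ j, j ≠ i → g j = g' j) :
    maxErase i g = maxErase i g' := by
  unfold maxErase
  congr 1
  exact Finset.image_congr fun j hj => h j (Finset.mem_erase.mp hj).1

section OneDimensional

variable {w : ℝ}

lemma clamp_add_eq_self_iff (hw : w ∈ Set.Icc (0 : ℝ) 1) (t : ℝ) :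
    clamp (w + t) = w ↔ (0 < t → w = 1) ∧ (t < 0 → w = 0) := by
  obtain ⟨hw0, hw1⟩ := hw
  unfold clamp
  grind

lemma forall_mul_le_mul_Icc_iff (hw : w ∈ Set.Icc (0 : ℝ) 1) (d : ℝ) :
    (∀ x ∈ Set.Icc (0 : ℝ) 1, d * x ≤ d * w) ↔ (0 < d → w = 1) ∧ (d < 0 → w = 0) := by
  obtain ⟨hw0, hw1⟩ := hw
  constructor
  · intro h
    have h1 := h 1 ⟨zero_le_one, le_rfl⟩
    have h0 := h 0 ⟨le_rfl, zero_le_one⟩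
    constructor
    · intro hd; nlinarith
    · intro hd; nlinarith
  · rintro ⟨hpos, hneg⟩ x ⟨hx0, hx1⟩
    rcases lt_trichotomy d 0 with hd | rfl | hd
    · rw [hneg hd]; nlinarith
    · simp
    · rw [hpos hd]; nlinarith

lemma clamp_add_mul_eq_self_iff (hw : w ∈ Set.Icc (0 : ℝ) 1) {γ : ℝ} (hγ : 0 < γ) (d : ℝ) :
    clamp (w + γ * d) = w ↔ ∀ x ∈ Set.Icc (0 : ℝ) 1, d * x ≤ d * w := by
  rw [clamp_add_eq_self_iff hw, forall_mul_le_mul_Icc_iff hw, mul_pos_iff_of_pos_left hγ,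
    show γ * d < 0 ↔ d < 0 by rw [← neg_pos, ← mul_neg, mul_pos_iff_of_pos_left hγ, neg_pos]]

end OneDimensional

section LinearOnBox

variable {ι : Type*} [Fintype ι] [DecidableEq ι]

lemma sum_mul_update (c w : ι → ℝ) (q : ι) (x : ℝ) :
    ∑ q', c q' * Function.update w q x q' = ∑ q', c q' * w q' + c q * (x - w q) := by
  rw [← Finset.add_sum_erase _ _ (Finset.mem_univ q),
    ← Finset.add_sum_erase _ (fun q' => c q' * w q') (Finset.mem_univ q),
    Finset.sum_congr rfl fun q' hq' => by rw [Function.update_of_ne (Finset.ne_of_mem_erase hq')],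
    Function.update_self]
  ring

lemma forall_sum_mul_le_iff {s : Set ℝ} (c : ι → ℝ) {w : ι → ℝ} (hw : ∀ q, w q ∈ s) :
    (∀ w' : ι → ℝ, (∀ q, w' q ∈ s) → ∑ q, c q * w' q ≤ ∑ q, c q * w q) ↔
      ∀ q, ∀ x ∈ s, c q * x ≤ c q * w q := by
  constructor
  · intro h q x hx
    have hmem : ∀ q', Function.update w q x q' ∈ s :=
      (Function.forall_update_iff w fun _ y => y ∈ s).2 ⟨hx, fun q' _ => hw q'⟩
    have := h _ hmem
    rw [sum_mul_update] at this
    linarith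
  · intro h w' hw'
    exact Finset.sum_le_sum fun q _ => h q (w' q) (hw' q)

end LinearOnBox

section WeightGame

variable {n m : ℕ} (f w : Fin n → Fin m → ℝ) (i : Fin n)

noncomputable def marginalUtility (q : Fin m) : ℝ :=
  f i q - maxErase i (fun j => f j q * w j q)

lemma Uutil_eq_sum_marginalUtility_mul :
    Uutil f w i = ∑ q, marginalUtility f w i q * w i q :=
  Finset.sum_congr rfl fun q _ => by rw [marginalUtility, sub_mul]

lemma Uutil_update_self (w' : Fin m → ℝ) :
    Uutil f (Function.update w i w') i = ∑ q, marginalUtility f w i q * w' q := by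
  refine Finset.sum_congr rfl fun q _ => ?_
  have hbid : maxErase i (fun j => f j q * Function.update w i w' j q)
      = maxErase i (fun j => f j q * w j q) :=
    maxErase_congr fun j hj => by rw [Function.update_of_ne hj]
  rw [Function.update_self, hbid, marginalUtility, sub_mul]

lemma pbrag_apply (γ : Fin n → Fin m → ℝ) (q : Fin m) :
    pbrag f γ w i q = clamp (w i q + γ i q * marginalUtility f w i q) :=
  rfl

end WeightGame

theorem pbrag_fixed_point_iff_nash_general {n m : ℕ} (f : Fin n → Fin m → ℝ)
    (γ : Fin n → Fin m → ℝ) (hγ : ∀ i q, 0 < γ i q)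
    (Wbar : Fin n → Fin m → ℝ) (hWbar : InUnit Wbar) :
    pbrag f γ Wbar = Wbar ↔ IsNashW f Wbar := by
  have hrow : ∀ i, (∀ q, pbrag f γ Wbar i q = Wbar i q) ↔
      ∀ w' : Fin m → ℝ, (∀ q, w' q ∈ Set.Icc (0 : ℝ) 1) →
        Uutil f (Function.update Wbar i w') i ≤ Uutil f Wbar i := by
    intro i
    simp_rw [Uutil_update_self, Uutil_eq_sum_marginalUtility_mul, pbrag_apply]
    rw [forall_sum_mul_le_iff _ (hWbar i)]
    exact forall_congr' fun q => clamp_add_mul_eq_self_iff (hWbar i q) (hγ i q) _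
  simp only [funext_iff, IsNashW, hrow]

theorem pbrag_fixed_point_iff_nash {n m : ℕ} (f : Fin n → Fin m → ℝ)
    (hf : ∀ i q, 0 ≤ f i q)
    (hnt : ∀ q : Fin m, ∃ j : Fin n, ¬ Dominating f j q)
    (γ : Fin n → Fin m → ℝ) (hγ : ∀ i q, 0 < γ i q)
    (Wbar : Fin n → Fin m → ℝ) (hWbar : InUnit Wbar) :
    pbrag f γ Wbar = Wbar ↔ IsNashW f Wbar :=
  pbrag_fixed_point_iff_nash_general f γ hγ Wbar hWbar
end
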